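/- arXiv:2212.01784 — 2 statements merged into one kernel-verified Lean document; each statement's English description precedes it below -/
import Mathlib

section
/- Let m ≥ 0 and j ≥ 1 be integers. Then C(m+j+1, m)·∑_{l=1}^{j+1} C(j+1, l)·(−1)^{l+1}·l/(m+l+1) = (m+1)/(m+j+2). -/
open scoped BigOperators

lemma aux18 : ∀ (j m : ℕ), ∑ k ∈ Finset.range (j+1), ((j.choose k : ℚ) * (-1)^k / ((m:ℚ)+k+1))
    = (m.factorial * j.factorial : ℚ) / ((m+j+1).factorial) := by
  intro j
  induction j with
  | zero =>
    intro m
    have h0 : ((m:ℚ)+1) ≠ 0 := by positivity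
    have hf : ((m.factorial : ℚ)) ≠ 0 := by exact_mod_cast m.factorial_ne_zero
    simp [Nat.factorial_succ]
    field_simp
  | succ j ih =>
    intro m
    have h0 : ((m:ℚ)+1) ≠ 0 := by positivity
    rw [Finset.sum_range_succ']
    have hterm : ∀ k, (((j+1).choose (k+1) : ℚ) * (-1)^(k+1) / ((m:ℚ)+((k+1:ℕ):ℚ)+1))
        = (j.choose k : ℚ) * (-1)^(k+1) / ((m:ℚ)+k+2)
          + (j.choose (k+1) : ℚ) * (-1)^(k+1) / ((m:ℚ)+k+2) := by
      intro k
      rw [Nat.choose_succ_succ]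
      push_cast
      ring
    simp only [hterm]
    rw [Finset.sum_add_distrib]
    have hA : ∑ k ∈ Finset.range (j+1), (j.choose k : ℚ) * (-1)^(k+1) / ((m:ℚ)+k+2)
        = -(((m+1).factorial * j.factorial : ℚ) / ((m+j+2).factorial)) := by
      have h' := ih (m+1)
      push_cast at h'
      rw [show m+1+j+1 = m+j+2 from by omega] at h'
      rw [eq_neg_iff_add_eq_zero, ← h', ← Finset.sum_add_distrib]
      apply Finset.sum_eq_zero
      intro k _
      ring
    have hB : ∑ k ∈ Finset.range (j+1), (j.choose (k+1) : ℚ) * (-1)^(k+1) / ((m:ℚ)+k+2)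
        = ((m.factorial * j.factorial : ℚ) / ((m+j+1).factorial)) - 1/((m:ℚ)+1) := by
      have h' := ih m
      rw [Finset.sum_range_succ'] at h'
      have e : ∑ k ∈ Finset.range j, (j.choose (k+1) : ℚ) * (-1)^(k+1) / ((m:ℚ)+k+2)
          = ∑ k ∈ Finset.range j, ((j.choose (k+1) : ℚ) * (-1)^(k+1) / ((m:ℚ)+((k+1:ℕ):ℚ)+1)) := by
        apply Finset.sum_congr rfl; intro k _; push_cast; ring
      rw [Finset.sum_range_succ, e]
      simp only [Nat.choose_succ_self, Nat.cast_zero, Nat.choose_zero_right, Nat.cast_one,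
        pow_zero, zero_mul, zero_div, add_zero, one_mul, mul_one] at h' ⊢
      linarith [h']
    rw [hA, hB]
    simp only [Nat.choose_zero_right, Nat.cast_one, pow_zero, Nat.cast_zero]
    have harr : m + (j+1) + 1 = m + j + 2 := by ring
    rw [harr]
    have hf1 : ((m+j+1).factorial : ℚ) ≠ 0 := by exact_mod_cast (m+j+1).factorial_ne_zero
    have hf2 : ((m+j+2).factorial : ℚ) ≠ 0 := by exact_mod_cast (m+j+2).factorial_ne_zero
    have e2 : ((m+j+2).factorial : ℚ) = ((m:ℚ)+j+2) * (m+j+1).factorial := by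
      have : (m+j+2).factorial = (m+j+2) * (m+j+1).factorial := rfl
      rw [this]; push_cast; ring
    have e3 : ((m+1).factorial : ℚ) = ((m:ℚ)+1) * m.factorial := by
      have : (m+1).factorial = (m+1) * m.factorial := rfl
      rw [this]; push_cast; ring
    have e4 : (((j+1).factorial) : ℚ) = ((j:ℚ)+1) * j.factorial := by
      have : (j+1).factorial = (j+1) * j.factorial := rfl
      rw [this]; push_cast; ring
    rw [e2, e3, e4]
    field_simp
    ring

/-- a binomial identity over the rationals. -/
theorem stmt_18 (m j : ℕ) (hj : 1 ≤ j) :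
    ((m + j + 1).choose m : ℚ)
        * ∑ l ∈ Finset.Icc 1 (j + 1),
            ((j + 1).choose l : ℚ) * (-1) ^ (l + 1) * (l : ℚ) / ((m:ℚ) + l + 1)
      = ((m:ℚ) + 1) / ((m:ℚ) + j + 2) := by
  rw [← Finset.Ico_add_one_right_eq_Icc, Finset.sum_Ico_eq_sum_range]
  have hr : j + 1 + 1 - 1 = j + 1 := by omega
  rw [hr]
  have hterm : ∀ k, (((j+1).choose (1+k) : ℚ) * (-1) ^ ((1+k)+1) * ((1+k : ℕ) : ℚ) / ((m:ℚ) + (1+k : ℕ) + 1))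
      = ((j:ℚ)+1) * ((j.choose k : ℚ) * (-1)^k / (((m+1 : ℕ):ℚ) + k + 1)) := by
    intro k
    have h := Nat.add_one_mul_choose_eq j k
    have h2 : ((j+1) * j.choose k : ℚ) = ((j+1).choose (k+1) : ℚ) * (k+1) := by
      exact_mod_cast congrArg (Nat.cast : ℕ → ℚ) h
    have hk : 1 + k = k + 1 := by ring
    rw [hk]
    push_cast
    push_cast at h2
    linear_combination (-(-1:ℚ)^k / ((m:ℚ)+(k:ℚ)+2)) * h2
  rw [Finset.sum_congr rfl (fun k _ => hterm k)]
  rw [← Finset.mul_sum, aux18 j (m+1)]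
  -- now: C(m+j+1,m) * ((j+1) * ((m+1)! * j! / (m+1+j+1)!)) = (m+1)/(m+j+2)
  have harr : m + 1 + j + 1 = m + j + 2 := by ring
  rw [harr]
  have hkey : ((m+j+1).choose m : ℚ) * m.factorial * (j+1).factorial = (m+j+1).factorial := by
    have h := Nat.choose_mul_factorial_mul_factorial (show m ≤ m+j+1 by omega)
    have h2 : m + j + 1 - m = j + 1 := by omega
    rw [h2] at h
    exact_mod_cast congrArg (Nat.cast : ℕ → ℚ) h
  have e2 : ((m+j+2).factorial : ℚ) = ((m:ℚ)+j+2) * (m+j+1).factorial := by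
    have : (m+j+2).factorial = (m+j+2) * (m+j+1).factorial := rfl
    rw [this]; push_cast; ring
  have e3 : ((m+1).factorial : ℚ) = ((m:ℚ)+1) * m.factorial := by
    have : (m+1).factorial = (m+1) * m.factorial := rfl
    rw [this]; push_cast; ring
  have e4 : (((j+1).factorial) : ℚ) = ((j:ℚ)+1) * j.factorial := by
    have : (j+1).factorial = (j+1) * j.factorial := rfl
    rw [this]; push_cast; ring
  have hf1 : ((m+j+1).factorial : ℚ) ≠ 0 := by exact_mod_cast (m+j+1).factorial_ne_zero
  have hfm : ((m).factorial : ℚ) ≠ 0 := by exact_mod_cast (m).factorial_ne_zero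
  have hfj : ((j).factorial : ℚ) ≠ 0 := by exact_mod_cast (j).factorial_ne_zero
  have hd : ((m:ℚ)+j+2) ≠ 0 := by positivity
  rw [e2, e3]
  rw [e4] at hkey
  field_simp
  linear_combination hkey
end

section
/- Let n, k be integers with 3 ≤ n ≤ k, and let j be an integer with 1 ≤ j ≤ n−2. Then (j+1)·C(k−n+j+1, k−n)·∑_{l=1}^{j} C(j,l)·l·(−1)^{l+1}·(k−1 − (n−2)(k−n+l+1))/(k−n+l+1)² + (n−2) = (k−1)(k−n+1)·∑_{i=2}^{j+1} 1/(k−n+i) − (n−2)(k−n). -/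
open scoped BigOperators


lemma sum_pascal (g : ℝ → ℝ) (J : ℕ) (x : ℝ) :
    ∑ l ∈ Finset.range (J + 2), (-1 : ℝ) ^ l * ((J+1).choose l : ℝ) * g (x + l)
      = (∑ l ∈ Finset.range (J + 1), (-1 : ℝ) ^ l * (J.choose l : ℝ) * g (x + l))
        - ∑ l ∈ Finset.range (J + 1), (-1 : ℝ) ^ l * (J.choose l : ℝ) * g (x + 1 + l) := by
  have e1 : ∑ l ∈ Finset.range (J + 1), (-1 : ℝ) ^ l * (J.choose l : ℝ) * g (x + l)
      = (∑ l ∈ Finset.range (J + 1),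
          (-1 : ℝ) ^ (l+1) * (J.choose (l+1) : ℝ) * g (x + ((l+1 : ℕ) : ℝ)))
        + (-1 : ℝ) ^ (0:ℕ) * (J.choose 0 : ℝ) * g (x + ((0:ℕ) : ℝ)) := by
    rw [← Finset.sum_range_succ' (fun l => (-1 : ℝ) ^ l * (J.choose l : ℝ) * g (x + l)) (J+1),
      Finset.sum_range_succ (fun l => (-1 : ℝ) ^ l * (J.choose l : ℝ) * g (x + l)) (J+1)]
    simp [Nat.choose_succ_self]
  have h : ∀ l : ℕ, (-1 : ℝ) ^ (l+1) * (((J+1).choose (l+1) : ℕ) : ℝ) * g (x + ((l+1:ℕ):ℝ))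
      = -((-1 : ℝ) ^ l * (J.choose l : ℝ) * g (x + 1 + l))
        + (-1 : ℝ) ^ (l+1) * (J.choose (l+1) : ℝ) * g (x + ((l+1:ℕ):ℝ)) := by
    intro l
    have hx : x + ((l+1 : ℕ) : ℝ) = x + 1 + (l:ℝ) := by push_cast; ring
    rw [Nat.choose_succ_succ, Nat.cast_add, hx]
    ring
  rw [Finset.sum_range_succ' (fun l => (-1 : ℝ) ^ l * ((J+1).choose l : ℝ) * g (x + l)) (J+1)]
  simp only [h]
  rw [Finset.sum_add_distrib, Finset.sum_neg_distrib]
  have h0 : (-1 : ℝ) ^ (0:ℕ) * (((J+1).choose 0 : ℕ) : ℝ) * g (x + ((0:ℕ) : ℝ))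
      = (-1 : ℝ) ^ (0:ℕ) * ((J.choose 0 : ℕ) : ℝ) * g (x + ((0:ℕ) : ℝ)) := by simp
  rw [h0, e1]
  ring

lemma prod_rel (J : ℕ) (x : ℝ) :
    (∏ i ∈ Finset.range (J+1), (x + 1 + i)) * x = ∏ i ∈ Finset.range (J+2), (x + i) := by
  rw [Finset.prod_range_succ' (fun i => x + (i:ℝ)) (J+1)]
  simp only [Nat.cast_zero, add_zero, Nat.cast_add, Nat.cast_one]
  congr 1
  exact Finset.prod_congr rfl (fun i _ => by ring)

lemma sum_rel (J : ℕ) (x : ℝ) :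
    (∑ i ∈ Finset.range (J+1), 1 / (x + 1 + i)) + 1 / x
      = ∑ i ∈ Finset.range (J+2), 1 / (x + i) := by
  rw [Finset.sum_range_succ' (fun i => 1 / (x + (i:ℝ))) (J+1)]
  simp only [Nat.cast_zero, add_zero, Nat.cast_add, Nat.cast_one]
  congr 1
  exact Finset.sum_congr rfl (fun i _ => by ring_nf)

lemma prod_pos' (J : ℕ) (x : ℝ) (hx : 0 < x) : 0 < ∏ i ∈ Finset.range (J+1), (x + i) :=
  Finset.prod_pos (fun i _ => by positivity)

lemma lemA (J : ℕ) : ∀ x : ℝ, 0 < x →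
    ∑ l ∈ Finset.range (J+1), (-1:ℝ)^l * (J.choose l : ℝ) / (x + l)
      = (J.factorial : ℝ) / ∏ i ∈ Finset.range (J+1), (x + i) := by
  induction J with
  | zero => intro x hx; simp
  | succ J ih =>
    intro x hx
    have hx1 : (0:ℝ) < x + 1 := by linarith
    have key := sum_pascal (fun y => 1 / y) J x
    simp only [mul_one_div] at key
    rw [key, ih x hx, ih (x+1) hx1]
    have h2 := Finset.prod_range_succ (fun i => x + (i:ℝ)) (J+1)
    rw [show J+1+1 = J+2 from rfl] at h2
    have hp := (prod_pos' J x hx).ne'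
    have hp' := (prod_pos' J (x+1) hx1).ne'
    have hrel := prod_rel J x
    have hfact : (((J+1).factorial : ℕ) : ℝ) = ((J:ℝ)+1) * (J.factorial : ℝ) := by
      rw [Nat.factorial_succ]; push_cast; ring
    rw [hfact, h2]
    have hxJ : x + ((J+1 : ℕ):ℝ) ≠ 0 := by push_cast; linarith
    rw [h2] at hrel
    have hp'eq : ∏ i ∈ Finset.range (J+1), (x + 1 + i)
        = (∏ i ∈ Finset.range (J+1), (x + i)) * (x + ((J+1:ℕ):ℝ)) / x :=
      (eq_div_iff hx.ne').mpr hrel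
    rw [hp'eq]
    push_cast
    field_simp
    ring

lemma lemB (J : ℕ) : ∀ x : ℝ, 0 < x →
    ∑ l ∈ Finset.range (J+1), (-1:ℝ)^l * (J.choose l : ℝ) / (x + l)^2
      = ((J.factorial : ℝ) / ∏ i ∈ Finset.range (J+1), (x + i))
          * ∑ i ∈ Finset.range (J+1), 1 / (x + i) := by
  induction J with
  | zero => intro x hx; simp [div_pow]; ring
  | succ J ih =>
    intro x hx
    have hx1 : (0:ℝ) < x + 1 := by linarith
    have key := sum_pascal (fun y => 1 / y^2) J x
    simp only [mul_one_div] at key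
    rw [key, ih x hx, ih (x+1) hx1]
    have h2 := Finset.prod_range_succ (fun i => x + (i:ℝ)) (J+1)
    rw [show J+1+1 = J+2 from rfl] at h2
    have hs2 := Finset.sum_range_succ (fun i => 1 / (x + (i:ℝ))) (J+1)
    rw [show J+1+1 = J+2 from rfl] at hs2
    have hp := (prod_pos' J x hx).ne'
    have hrel := prod_rel J x
    have hsrel := sum_rel J x
    have hfact : (((J+1).factorial : ℕ) : ℝ) = ((J:ℝ)+1) * (J.factorial : ℝ) := by
      rw [Nat.factorial_succ]; push_cast; ring
    rw [hfact, h2, hs2] at *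
    have hxJ : x + ((J+1 : ℕ):ℝ) ≠ 0 := by push_cast; linarith
    have hp'eq : ∏ i ∈ Finset.range (J+1), (x + 1 + i)
        = (∏ i ∈ Finset.range (J+1), (x + i)) * (x + ((J+1:ℕ):ℝ)) / x :=
      (eq_div_iff hx.ne').mpr hrel
    have hs'eq : ∑ i ∈ Finset.range (J+1), 1 / (x + 1 + i)
        = (∑ i ∈ Finset.range (J+1), 1 / (x + i)) + 1 / (x + ((J+1:ℕ):ℝ)) - 1 / x := by
      rw [← hsrel]; ring
    rw [hp'eq, hs'eq]
    push_cast
    field_simp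
    ring

lemma prodP (m : ℕ) : ∀ J : ℕ, ∏ i ∈ Finset.range (J+1), ((m:ℝ) + 2 + i)
    = ((m+J+2).factorial : ℝ) / ((m+1).factorial : ℝ) := by
  intro J
  induction J with
  | zero =>
    simp only [zero_add, Finset.prod_range_one, Nat.cast_zero, add_zero]
    rw [show m+0+2 = (m+1)+1 from by omega, Nat.factorial_succ]
    have := Nat.factorial_pos (m+1)
    push_cast
    field_simp
    ring
  | succ J ih =>
    have h2 := Finset.prod_range_succ (fun i => (m:ℝ) + 2 + i) (J+1)
    rw [show J+1+1 = J+2 from rfl] at h2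
    rw [h2, ih,
      show ((m:ℝ)+2+((J+1:ℕ):ℝ)) = (((m+J+2)+1 : ℕ) : ℝ) from by push_cast; ring,
      show m+(J+1)+2 = (m+J+2)+1 from by omega,
      show ((m+J+2)+1).factorial = ((m+J+2)+1) * (m+J+2).factorial from Nat.factorial_succ _,
      Nat.cast_mul, div_mul_eq_mul_div, mul_comm]

lemma core (m J : ℕ) (A B : ℝ) :
    ((J:ℝ) + 2) * (((m + J + 2).choose m : ℕ) : ℝ)
        * (∑ l ∈ Finset.Icc 1 (J+1),
            ((J+1).choose l : ℝ) * (l : ℝ) * (-1)^(l+1)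
              * (A - B * ((m:ℝ) + l + 1)) / ((m:ℝ) + l + 1)^2)
      + B
    = A * ((m:ℝ)+1) * (∑ i ∈ Finset.Icc 2 (J+2), 1 / ((m:ℝ) + i)) - B * (m:ℝ) := by
  have hx : (0:ℝ) < (m:ℝ) + 2 := by positivity
  -- convert Icc sums to range sums
  rw [← Finset.Ico_add_one_right_eq_Icc, Finset.sum_Ico_eq_sum_range,
      ← Finset.Ico_add_one_right_eq_Icc 2 (J+2), Finset.sum_Ico_eq_sum_range]
  simp only [show J+1+1-1 = J+1 from by omega, show J+2+1-2 = J+1 from by omega]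
  -- pointwise rewrite of the left sum
  have hterm : ∀ s ∈ Finset.range (J+1),
      ((J+1).choose (1+s) : ℝ) * ((1+s : ℕ) : ℝ) * (-1)^((1+s)+1)
          * (A - B * ((m:ℝ) + ((1+s : ℕ):ℝ) + 1)) / ((m:ℝ) + ((1+s : ℕ):ℝ) + 1)^2
      = ((J:ℝ)+1) * (A * ((-1:ℝ)^s * (J.choose s : ℝ) / (((m:ℝ)+2) + s)^2)
          - B * ((-1:ℝ)^s * (J.choose s : ℝ) / (((m:ℝ)+2) + s))) := by
    intro s _
    have hch : (((J+1).choose (1+s) : ℕ) : ℝ) * ((1+s : ℕ) : ℝ)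
        = ((J:ℝ)+1) * (J.choose s : ℝ) := by
      have := (Nat.add_one_mul_choose_eq J s).symm
      rw [add_comm 1 s]
      exact_mod_cast this
    have hy : (0:ℝ) < (m:ℝ) + ((1+s : ℕ):ℝ) + 1 := by positivity
    have hyy : (m:ℝ) + ((1+s : ℕ):ℝ) + 1 = ((m:ℝ)+2) + s := by push_cast; ring
    have hsgn : (-1:ℝ)^((1+s)+1) = (-1:ℝ)^s := by
      rw [show (1+s)+1 = s+2 from by omega, pow_add]; norm_num
    have hz : ((m:ℝ)+2) + (s:ℝ) ≠ 0 := by positivity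
    rw [hsgn, hyy]
    calc (((J+1).choose (1+s) : ℕ) : ℝ) * ((1+s : ℕ) : ℝ) * (-1:ℝ)^s
          * (A - B * (((m:ℝ)+2) + s)) / (((m:ℝ)+2) + s)^2
        = ((((J+1).choose (1+s) : ℕ) : ℝ) * ((1+s : ℕ) : ℝ))
            * ((-1:ℝ)^s * (A - B * (((m:ℝ)+2) + s)) / (((m:ℝ)+2) + s)^2) := by ring
      _ = (((J:ℝ)+1) * (J.choose s : ℝ))
            * ((-1:ℝ)^s * (A - B * (((m:ℝ)+2) + s)) / (((m:ℝ)+2) + s)^2) := by rw [hch]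
      _ = ((J:ℝ)+1) * (A * ((-1:ℝ)^s * (J.choose s : ℝ) / (((m:ℝ)+2) + s)^2)
            - B * ((-1:ℝ)^s * (J.choose s : ℝ) / (((m:ℝ)+2) + s))) := by
          field_simp
  rw [Finset.sum_congr rfl hterm]
  have hsplit : ∑ s ∈ Finset.range (J+1),
      (((J:ℝ)+1) * (A * ((-1:ℝ)^s * (J.choose s : ℝ) / (((m:ℝ)+2) + s)^2)
          - B * ((-1:ℝ)^s * (J.choose s : ℝ) / (((m:ℝ)+2) + s))))
      = ((J:ℝ)+1) * (A * (∑ s ∈ Finset.range (J+1), (-1:ℝ)^s * (J.choose s : ℝ) / (((m:ℝ)+2) + s)^2)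
          - B * (∑ s ∈ Finset.range (J+1), (-1:ℝ)^s * (J.choose s : ℝ) / (((m:ℝ)+2) + s))) := by
    rw [Finset.mul_sum, Finset.mul_sum, ← Finset.sum_sub_distrib, ← Finset.mul_sum]
  rw [hsplit, lemA J ((m:ℝ)+2) hx, lemB J ((m:ℝ)+2) hx]
  -- right harmonic sum
  have hH : ∑ s ∈ Finset.range (J+1), 1 / ((m:ℝ) + ((2+s : ℕ):ℝ))
      = ∑ i ∈ Finset.range (J+1), 1 / (((m:ℝ)+2) + i) := by
    refine Finset.sum_congr rfl fun s _ => ?_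
    push_cast; ring_nf
  rw [hH, prodP m J]
  -- choose in factorials
  have hCnat : (m+J+2).choose m * m.factorial * (J+2).factorial = (m+J+2).factorial := by
    have h := Nat.choose_mul_factorial_mul_factorial (show m ≤ m+J+2 by omega)
    rwa [show m+J+2-m = J+2 from by omega] at h
  have hC : (((m + J + 2).choose m : ℕ) : ℝ)
      = ((m+J+2).factorial : ℝ) / ((m.factorial : ℝ) * ((J+2).factorial : ℝ)) := by
    rw [eq_div_iff (by positivity)]
    rw [← mul_assoc]
    exact_mod_cast congrArg (Nat.cast : ℕ → ℝ) hCnat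
  rw [hC, show ((J+2).factorial : ℝ) = ((J:ℝ)+2)*((J:ℝ)+1)*(J.factorial : ℝ) from by
        rw [show J+2 = (J+1)+1 from rfl, Nat.factorial_succ, Nat.factorial_succ]; push_cast; ring,
      show ((m+1).factorial : ℝ) = ((m:ℝ)+1)*(m.factorial : ℝ) from by
        rw [Nat.factorial_succ]; push_cast; ring]
  have hF1 : ((m+J+2).factorial : ℝ) ≠ 0 := by positivity
  have hF2 : ((m).factorial : ℝ) ≠ 0 := by positivity
  have hF3 : ((J).factorial : ℝ) ≠ 0 := by positivity
  field_simp
  ring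

/-- the closed form of `W_j`. -/
theorem stmt_19 (n k : ℕ) (hn : 3 ≤ n) (hk : n ≤ k)
    (j : ℕ) (hj1 : 1 ≤ j) (hj2 : j ≤ n - 2) :
    ((j:ℝ) + 1) * ((k - n + j + 1).choose (k - n) : ℝ)
        * (∑ l ∈ Finset.Icc 1 j,
            (j.choose l : ℝ) * (l : ℝ) * (-1) ^ (l + 1)
              * ((k:ℝ) - 1 - ((n:ℝ) - 2) * ((k:ℝ) - n + l + 1))
              / ((k:ℝ) - n + l + 1) ^ 2)
      + ((n:ℝ) - 2)
    = ((k:ℝ) - 1) * ((k:ℝ) - n + 1) * (∑ i ∈ Finset.Icc 2 (j + 1), 1 / ((k:ℝ) - n + i))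
      - ((n:ℝ) - 2) * ((k:ℝ) - n) := by
  obtain ⟨m, rfl⟩ : ∃ m, k = n + m := ⟨k - n, by omega⟩
  obtain ⟨J, rfl⟩ : ∃ J, j = J + 1 := ⟨j - 1, by omega⟩
  simp only [show n + m - n = m from by omega, show m + (J+1) + 1 = m + J + 2 from by omega,
    show J + 1 + 1 = J + 2 from by omega]
  push_cast
  simp only [show (n:ℝ) + (m:ℝ) - (n:ℝ) = (m:ℝ) from by ring]
  have h := core m J ((n:ℝ) + (m:ℝ) - 1) ((n:ℝ) - 2)
  linear_combination h
end
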